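/- arXiv:2501.18414 — 10 statements merged into one kernel-verified Lean document; each statement's English description precedes it below -/
import Mathlib

section
/- Let (A, ⊣, ⊥, ⊢) be a triassociative algebra over a field K and let R : A → A be a Rota–Baxter operator of weight λ ∈ K on A. Define new products on A by x ◁ y = R(x) ⊣ y + x ⊣ R(y) + λ x ⊣ y, x △ y = R(x) ⊥ y + x ⊥ R(y) + λ x ⊥ y, and x ▷ y = R(x) ⊢ y + x ⊢ R(y) + λ x ⊢ y. Then (A, ◁, △, ▷) is a triassociative algebra; moreover R : (A, ◁, △, ▷) → (A, ⊣, ⊥, ⊢) is a morphism of triassociative algebras, and R is a Rota–Baxter operator of weight λ on (A, ◁, △, ▷). -/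
structure IsTriassoc (K : Type*) [Field K] {A : Type*} [AddCommGroup A] [Module K A]
    (l m r : A → A → A) : Prop where
  l_lin₁ : ∀ y, IsLinearMap K (fun x => l x y)
  l_lin₂ : ∀ x, IsLinearMap K (fun y => l x y)
  m_lin₁ : ∀ y, IsLinearMap K (fun x => m x y)
  m_lin₂ : ∀ x, IsLinearMap K (fun y => m x y)
  r_lin₁ : ∀ y, IsLinearMap K (fun x => r x y)
  r_lin₂ : ∀ x, IsLinearMap K (fun y => r x y)
  ax1 : ∀ x y z, l (l x y) z = l x (l y z)
  ax2 : ∀ x y z, r (r x y) z = r x (r y z)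
  ax3 : ∀ x y z, m (m x y) z = m x (m y z)
  ax4 : ∀ x y z, l (l x y) z = l x (r y z)
  ax5 : ∀ x y z, l (l x y) z = l x (m y z)
  ax6 : ∀ x y z, l (r x y) z = r x (l y z)
  ax7 : ∀ x y z, r (l x y) z = r x (r y z)
  ax8 : ∀ x y z, r (m x y) z = r x (r y z)
  ax9 : ∀ x y z, l (m x y) z = m x (l y z)
  ax10 : ∀ x y z, m (l x y) z = m x (r y z)
  ax11 : ∀ x y z, m (r x y) z = r x (m y z)

/-- The Rota–Baxter deformed product: `x ◁ y = R(x)∗y + x∗R(y) + λ • (x∗y)`. -/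
def rbProd {K : Type*} [Field K] {A : Type*} [AddCommGroup A] [Module K A]
    (mul : A → A → A) (R : A → A) (lam : K) : A → A → A :=
  fun x y => mul (R x) y + mul x (R y) + lam • mul x y

/-!
Write `⋆` for the `λ`-deformation `x ⋆ y = R x ∗ y + x ∗ R y + λ • (x ∗ y)` of a product `∗`,
so that the Rota–Baxter identity reads `R x ∗ R y = R (x ⋆ y)`. Every triassociativity axiom
has the shape `(x ∗₁ y) ∗₂ z = x ∗₃ (y ∗₄ z)`. Expanding `(x ⋆₁ y) ⋆₂ z` and `x ⋆₃ (y ⋆₄ z)`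
by bilinearity, and replacing `R (x ⋆₁ y)` by `R x ∗₁ R y` and `R (y ⋆₄ z)` by `R y ∗₄ R z`,
both sides become the same combination of nine terms `(u ∗₁ v) ∗₂ w = u ∗₃ (v ∗₄ w)` with
`u, v, w` among `x, y, z` and their images under `R`.
-/

section RotaBaxter

variable {K A : Type*} [Field K] [AddCommGroup A] [Module K A]

def IsRotaBaxter (R : A → A) (lam : K) (mul : A → A → A) : Prop :=
  ∀ x y, mul (R x) (R y) = R (rbProd mul R lam x y)

theorem rbProd_apply (mul : A → A → A) (R : A → A) (lam : K) (x y : A) :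
    rbProd mul R lam x y = mul (R x) y + mul x (R y) + lam • mul x y :=
  rfl

variable (R : A →ₗ[K] A) (lam : K)

theorem isLinearMap_rbProd_left {mul : A → A → A}
    (hmul : ∀ y, IsLinearMap K (fun x => mul x y)) (y : A) :
    IsLinearMap K (fun x => rbProd mul R lam x y) := by
  refine ⟨fun u v => ?_, fun s u => ?_⟩ <;>
    simp only [rbProd_apply, map_add, map_smul, (hmul _).map_add, (hmul _).map_smul] <;> module

theorem isLinearMap_rbProd_right {mul : A → A → A}
    (hmul : ∀ x, IsLinearMap K (fun y => mul x y)) (x : A) :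
    IsLinearMap K (fun y => rbProd mul R lam x y) := by
  refine ⟨fun u v => ?_, fun s u => ?_⟩ <;>
    simp only [rbProd_apply, map_add, map_smul, (hmul _).map_add, (hmul _).map_smul] <;> module

theorem IsRotaBaxter.rbProd {mul : A → A → A} (hR : IsRotaBaxter R lam mul) :
    IsRotaBaxter R lam (rbProd mul R lam) := by
  intro x y
  rw [rbProd_apply, rbProd_apply (_root_.rbProd mul R lam), map_add, map_add,
    map_smul, ← hR, ← hR, ← hR]

theorem rbProd_mixed_assoc {a b c d : A → A → A}
    (ha : ∀ z, IsLinearMap K (fun x => a x z)) (hc : ∀ x, IsLinearMap K (fun y => c x y))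
    (hb : IsRotaBaxter R lam b) (hd : IsRotaBaxter R lam d)
    (habcd : ∀ x y z, a (b x y) z = c x (d y z)) (x y z : A) :
    rbProd a R lam (rbProd b R lam x y) z = rbProd c R lam x (rbProd d R lam y z) := by
  rw [rbProd_apply a, rbProd_apply c, ← hb, ← hd]
  simp only [rbProd_apply, (ha _).map_add, (ha _).map_smul, (hc _).map_add, (hc _).map_smul,
    habcd]
  module

end RotaBaxter

theorem rotaBaxter_triassoc {K A : Type*} [Field K] [AddCommGroup A] [Module K A]
    (l m r : A → A → A) (h : IsTriassoc K l m r) (R : A →ₗ[K] A) (lam : K)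
    (hRl : ∀ x y, l (R x) (R y) = R (rbProd l R lam x y))
    (hRm : ∀ x y, m (R x) (R y) = R (rbProd m R lam x y))
    (hRr : ∀ x y, r (R x) (R y) = R (rbProd r R lam x y)) :
    IsTriassoc K (rbProd l R lam) (rbProd m R lam) (rbProd r R lam)
    ∧ (∀ x y, R (rbProd l R lam x y) = l (R x) (R y))
    ∧ (∀ x y, R (rbProd m R lam x y) = m (R x) (R y))
    ∧ (∀ x y, R (rbProd r R lam x y) = r (R x) (R y))
    ∧ (∀ x y, rbProd l R lam (R x) (R y) = R (rbProd (rbProd l R lam) R lam x y))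
    ∧ (∀ x y, rbProd m R lam (R x) (R y) = R (rbProd (rbProd m R lam) R lam x y))
    ∧ (∀ x y, rbProd r R lam (R x) (R y) = R (rbProd (rbProd r R lam) R lam x y)) := by
  refine ⟨⟨isLinearMap_rbProd_left R lam h.l_lin₁, isLinearMap_rbProd_right R lam h.l_lin₂,
      isLinearMap_rbProd_left R lam h.m_lin₁, isLinearMap_rbProd_right R lam h.m_lin₂,
      isLinearMap_rbProd_left R lam h.r_lin₁, isLinearMap_rbProd_right R lam h.r_lin₂,
      rbProd_mixed_assoc R lam h.l_lin₁ h.l_lin₂ hRl hRl h.ax1,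
      rbProd_mixed_assoc R lam h.r_lin₁ h.r_lin₂ hRr hRr h.ax2,
      rbProd_mixed_assoc R lam h.m_lin₁ h.m_lin₂ hRm hRm h.ax3,
      rbProd_mixed_assoc R lam h.l_lin₁ h.l_lin₂ hRl hRr h.ax4,
      rbProd_mixed_assoc R lam h.l_lin₁ h.l_lin₂ hRl hRm h.ax5,
      rbProd_mixed_assoc R lam h.l_lin₁ h.r_lin₂ hRr hRl h.ax6,
      rbProd_mixed_assoc R lam h.r_lin₁ h.r_lin₂ hRl hRr h.ax7,
      rbProd_mixed_assoc R lam h.r_lin₁ h.r_lin₂ hRm hRr h.ax8,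
      rbProd_mixed_assoc R lam h.l_lin₁ h.m_lin₂ hRm hRl h.ax9,
      rbProd_mixed_assoc R lam h.m_lin₁ h.m_lin₂ hRl hRr h.ax10,
      rbProd_mixed_assoc R lam h.m_lin₁ h.r_lin₂ hRr hRm h.ax11⟩,
    fun x y => (hRl x y).symm, fun x y => (hRm x y).symm, fun x y => (hRr x y).symm,
    IsRotaBaxter.rbProd R lam hRl, IsRotaBaxter.rbProd R lam hRm, IsRotaBaxter.rbProd R lam hRr⟩
end

section
/- Let (A, ⊣, ⊥, ⊢) be a triassociative algebra over a field K and let N : A → A be a Nijenhuis operator on A. Define new products on A by x ◁ y = N(x) ⊣ y + x ⊣ N(y) − N(x ⊣ y), x △ y = N(x) ⊥ y + x ⊥ N(y) − N(x ⊥ y), and x ▷ y = N(x) ⊢ y + x ⊢ N(y) − N(x ⊢ y). Then (A, ◁, △, ▷) is a triassociative algebra; moreover N : (A, ◁, △, ▷) → (A, ⊣, ⊥, ⊢) is a morphism of triassociative algebras, and N is a Nijenhuis operator on (A, ◁, △, ▷). -/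
/-- The Nijenhuis deformed product: `x ◁ y = N(x)∗y + x∗N(y) − N(x∗y)`. -/
def nijProd {A : Type*} [AddCommGroup A]
    (mul : A → A → A) (N : A → A) : A → A → A :=
  fun x y => mul (N x) y + mul x (N y) - N (mul x y)

/-!
The deformed products are built so that `N (x ∗_N y) = N x ∗ N y`. Expanding an identity
`(x ∗_N y) ⋆_N z = x ∘_N (y •_N z)` term by term, every occurrence of `N` applied to an inner
product can be traded for a product of `N`-images, and what remains is a linear combination of
instances of the original identity `(x ∗ y) ⋆ z = x ∘ (y • z)`. Hence each of the eleven
triassociativity axioms passes to the deformed products, `N` is a morphism by construction, and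
the Nijenhuis identity for the deformed products is the old one applied to `N`-images.
-/

section

variable {A : Type*} [AddCommGroup A]

def IsNijenhuis (mul : A → A → A) (N : A → A) : Prop :=
  ∀ x y, mul (N x) (N y) = N (nijProd mul N x y)

variable {F : Type*} [FunLike F A A] [AddMonoidHomClass F A A]

theorem isNijenhuis_nijProd {mul : A → A → A} {N : F} (hN : IsNijenhuis mul N) :
    IsNijenhuis (nijProd mul N) N := by
  intro x y
  change mul (N (N x)) (N y) + mul (N x) (N (N y)) - N (mul (N x) (N y))
    = N (nijProd mul N (N x) y + nijProd mul N x (N y) - N (nijProd mul N x y))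
  rw [hN (N x) y, hN x (N y), hN x y, map_sub, map_add]

theorem nijProd_comp_eq_of_comp_eq {P Q R S : A → A → A} {N : F}
    (hP : ∀ a b z, P (a + b) z = P a z + P b z) (hR : ∀ x a b, R x (a + b) = R x a + R x b)
    (hNP : IsNijenhuis P N) (hNQ : IsNijenhuis Q N) (hNR : IsNijenhuis R N)
    (hNS : IsNijenhuis S N) (hPQRS : ∀ x y z, P (Q x y) z = R x (S y z)) (x y z : A) :
    nijProd P N (nijProd Q N x y) z = nijProd R N x (nijProd S N y z) := by
  have hP_sub a b z : P (a - b) z = P a z - P b z :=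
    (AddMonoidHom.mk' (P · z) (hP · · z)).map_sub a b
  have hR_sub x a b : R x (a - b) = R x a - R x b :=
    (AddMonoidHom.mk' (R x) (hR x)).map_sub a b
  change P (N (nijProd Q N x y)) z + P (nijProd Q N x y) (N z) - N (P (nijProd Q N x y) z)
    = R (N x) (nijProd S N y z) + R x (N (nijProd S N y z)) - N (R x (nijProd S N y z))
  rw [← hNQ x y, ← hNS y z]
  rw [IsNijenhuis] at hNP hNR
  simp only [nijProd, hP, hP_sub, hR, hR_sub, hPQRS, hNP, hNR, map_add, map_sub]
  abel

end

section

variable {R M : Type*} [Semiring R] [AddCommGroup M] [Module R M]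

theorem isLinearMap_nijProd_left {mul : M → M → M} (N : M →ₗ[R] M)
    (h : ∀ y, IsLinearMap R (mul · y)) (y : M) : IsLinearMap R (nijProd mul N · y) := by
  constructor
  · intro a b
    simp only [nijProd, map_add, (h _).map_add]
    abel
  · intro c a
    simp only [nijProd, map_smul, (h _).map_smul, smul_add, smul_sub]

theorem isLinearMap_nijProd_right {mul : M → M → M} (N : M →ₗ[R] M)
    (h : ∀ x, IsLinearMap R (mul x ·)) (x : M) : IsLinearMap R (nijProd mul N x ·) := by
  constructor
  · intro a b
    simp only [nijProd, map_add, (h _).map_add]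
    abel
  · intro c a
    simp only [nijProd, map_smul, (h _).map_smul, smul_add, smul_sub]

end

theorem IsTriassoc.nijProd {K A : Type*} [Field K] [AddCommGroup A] [Module K A]
    {l m r : A → A → A} (h : IsTriassoc K l m r) (N : A →ₗ[K] A)
    (hl : IsNijenhuis l N) (hm : IsNijenhuis m N) (hr : IsNijenhuis r N) :
    IsTriassoc K (nijProd l N) (nijProd m N) (nijProd r N) := by
  have add_left {P : A → A → A} (hP : ∀ z, IsLinearMap K (P · z)) a b z :
      P (a + b) z = P a z + P b z := (hP z).map_add a b
  have add_right {P : A → A → A} (hP : ∀ x, IsLinearMap K (P x ·)) x a b :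
      P x (a + b) = P x a + P x b := (hP x).map_add a b
  have hl₁ := add_left h.l_lin₁
  have hm₁ := add_left h.m_lin₁
  have hr₁ := add_left h.r_lin₁
  have hl₂ := add_right h.l_lin₂
  have hm₂ := add_right h.m_lin₂
  have hr₂ := add_right h.r_lin₂
  exact
    { l_lin₁ := isLinearMap_nijProd_left N h.l_lin₁
      l_lin₂ := isLinearMap_nijProd_right N h.l_lin₂
      m_lin₁ := isLinearMap_nijProd_left N h.m_lin₁
      m_lin₂ := isLinearMap_nijProd_right N h.m_lin₂
      r_lin₁ := isLinearMap_nijProd_left N h.r_lin₁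
      r_lin₂ := isLinearMap_nijProd_right N h.r_lin₂
      ax1 := nijProd_comp_eq_of_comp_eq hl₁ hl₂ hl hl hl hl h.ax1
      ax2 := nijProd_comp_eq_of_comp_eq hr₁ hr₂ hr hr hr hr h.ax2
      ax3 := nijProd_comp_eq_of_comp_eq hm₁ hm₂ hm hm hm hm h.ax3
      ax4 := nijProd_comp_eq_of_comp_eq hl₁ hl₂ hl hl hl hr h.ax4
      ax5 := nijProd_comp_eq_of_comp_eq hl₁ hl₂ hl hl hl hm h.ax5
      ax6 := nijProd_comp_eq_of_comp_eq hl₁ hr₂ hl hr hr hl h.ax6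
      ax7 := nijProd_comp_eq_of_comp_eq hr₁ hr₂ hr hl hr hr h.ax7
      ax8 := nijProd_comp_eq_of_comp_eq hr₁ hr₂ hr hm hr hr h.ax8
      ax9 := nijProd_comp_eq_of_comp_eq hl₁ hm₂ hl hm hm hl h.ax9
      ax10 := nijProd_comp_eq_of_comp_eq hm₁ hm₂ hm hl hm hr h.ax10
      ax11 := nijProd_comp_eq_of_comp_eq hm₁ hr₂ hm hr hr hm h.ax11 }

theorem nijenhuis_triassoc {K A : Type*} [Field K] [AddCommGroup A] [Module K A]
    (l m r : A → A → A) (h : IsTriassoc K l m r) (N : A →ₗ[K] A)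
    (hNl : ∀ x y, l (N x) (N y) = N (nijProd l N x y))
    (hNm : ∀ x y, m (N x) (N y) = N (nijProd m N x y))
    (hNr : ∀ x y, r (N x) (N y) = N (nijProd r N x y)) :
    IsTriassoc K (nijProd l N) (nijProd m N) (nijProd r N)
    ∧ (∀ x y, N (nijProd l N x y) = l (N x) (N y))
    ∧ (∀ x y, N (nijProd m N x y) = m (N x) (N y))
    ∧ (∀ x y, N (nijProd r N x y) = r (N x) (N y))
    ∧ (∀ x y, nijProd l N (N x) (N y) = N (nijProd (nijProd l N) N x y))
    ∧ (∀ x y, nijProd m N (N x) (N y) = N (nijProd (nijProd m N) N x y))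
    ∧ (∀ x y, nijProd r N (N x) (N y) = N (nijProd (nijProd r N) N x y)) :=
  ⟨h.nijProd N hNl hNm hNr,
    fun x y => (hNl x y).symm, fun x y => (hNm x y).symm, fun x y => (hNr x y).symm,
    isNijenhuis_nijProd hNl, isNijenhuis_nijProd hNm, isNijenhuis_nijProd hNr⟩
end

section
/- Let (A, ⊣, ⊥, ⊢) be a triassociative algebra over a field K and let P : A → A be a Reynolds operator on A. Define new products on A by x ◁ y = P(x) ⊣ y + x ⊣ P(y) − P(x) ⊣ P(y), x △ y = P(x) ⊥ y + x ⊥ P(y) − P(x) ⊥ P(y), and x ▷ y = P(x) ⊢ y + x ⊢ P(y) − P(x) ⊢ P(y). Then (A, ◁, △, ▷) is a triassociative algebra; moreover P : (A, ◁, △, ▷) → (A, ⊣, ⊥, ⊢) is a morphism of triassociative algebras, and P is a Reynolds operator on (A, ◁, △, ▷). -/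
/-- The Reynolds deformed product: `x ◁ y = P(x)∗y + x∗P(y) − P(x)∗P(y)`. -/
def reyProd {A : Type*} [AddCommGroup A]
    (mul : A → A → A) (P : A → A) : A → A → A :=
  fun x y => mul (P x) y + mul x (P y) - mul (P x) (P y)

section Deformation

variable {A : Type*} [AddCommGroup A]

def IsReynolds (mul : A → A → A) (P : A → A) : Prop :=
  ∀ x y, mul (P x) (P y) = P (reyProd mul P x y)

theorem IsReynolds.reyProd {F : Type*} [FunLike F A A] [AddMonoidHomClass F A A]
    {mul : A → A → A} {P : F} (hP : IsReynolds mul P) : IsReynolds (reyProd mul P) P := by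
  intro x y
  show _ = P (_ + _ - _)
  rw [map_sub, map_add, ← hP, ← hP, ← hP]
  rfl

theorem reyProd_assoc_of_isReynolds {R : Type*} [Ring R] [Module R A]
    {p q s t : A → A → A} {P : A → A}
    (hp : ∀ z, IsLinearMap R fun x => p x z) (hs : ∀ x, IsLinearMap R fun y => s x y)
    (hq : IsReynolds q P) (ht : IsReynolds t P)
    (hax : ∀ x y z, p (q x y) z = s x (t y z)) (x y z : A) :
    reyProd p P (reyProd q P x y) z = reyProd s P x (reyProd t P y z) := by
  have hxy := hq x y
  have hyz := ht y z
  simp only [reyProd] at hxy hyz ⊢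
  rw [← hxy, ← hyz]
  simp only [(hp _).map_add, (hp _).map_sub, (hs _).map_add, (hs _).map_sub, hax]
  abel

variable {R : Type*} [Ring R] [Module R A] {mul : A → A → A}

theorem reyProd_isLinearMap_left (P : A →ₗ[R] A) (hmul : ∀ y, IsLinearMap R fun x => mul x y)
    (y : A) : IsLinearMap R fun x => reyProd mul P x y where
  map_add a b := by
    simp only [reyProd, map_add, (hmul _).map_add]
    abel
  map_smul c a := by
    simp only [reyProd, map_smul, (hmul _).map_smul, smul_add, smul_sub]

theorem reyProd_isLinearMap_right (P : A →ₗ[R] A) (hmul : ∀ x, IsLinearMap R fun y => mul x y)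
    (x : A) : IsLinearMap R fun y => reyProd mul P x y where
  map_add a b := by
    simp only [reyProd, map_add, (hmul _).map_add]
    abel
  map_smul c a := by
    simp only [reyProd, map_smul, (hmul _).map_smul, smul_add, smul_sub]

end Deformation

theorem IsTriassoc.reyProd {K A : Type*} [Field K] [AddCommGroup A] [Module K A]
    {l m r : A → A → A} (h : IsTriassoc K l m r) (P : A →ₗ[K] A)
    (hl : IsReynolds l P) (hm : IsReynolds m P) (hr : IsReynolds r P) :
    IsTriassoc K (reyProd l P) (reyProd m P) (reyProd r P) where
  l_lin₁ := reyProd_isLinearMap_left P h.l_lin₁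
  l_lin₂ := reyProd_isLinearMap_right P h.l_lin₂
  m_lin₁ := reyProd_isLinearMap_left P h.m_lin₁
  m_lin₂ := reyProd_isLinearMap_right P h.m_lin₂
  r_lin₁ := reyProd_isLinearMap_left P h.r_lin₁
  r_lin₂ := reyProd_isLinearMap_right P h.r_lin₂
  ax1 := reyProd_assoc_of_isReynolds h.l_lin₁ h.l_lin₂ hl hl h.ax1
  ax2 := reyProd_assoc_of_isReynolds h.r_lin₁ h.r_lin₂ hr hr h.ax2
  ax3 := reyProd_assoc_of_isReynolds h.m_lin₁ h.m_lin₂ hm hm h.ax3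
  ax4 := reyProd_assoc_of_isReynolds h.l_lin₁ h.l_lin₂ hl hr h.ax4
  ax5 := reyProd_assoc_of_isReynolds h.l_lin₁ h.l_lin₂ hl hm h.ax5
  ax6 := reyProd_assoc_of_isReynolds h.l_lin₁ h.r_lin₂ hr hl h.ax6
  ax7 := reyProd_assoc_of_isReynolds h.r_lin₁ h.r_lin₂ hl hr h.ax7
  ax8 := reyProd_assoc_of_isReynolds h.r_lin₁ h.r_lin₂ hm hr h.ax8
  ax9 := reyProd_assoc_of_isReynolds h.l_lin₁ h.m_lin₂ hm hl h.ax9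
  ax10 := reyProd_assoc_of_isReynolds h.m_lin₁ h.m_lin₂ hl hr h.ax10
  ax11 := reyProd_assoc_of_isReynolds h.m_lin₁ h.r_lin₂ hr hm h.ax11

theorem reynolds_triassoc {K A : Type*} [Field K] [AddCommGroup A] [Module K A]
    (l m r : A → A → A) (h : IsTriassoc K l m r) (P : A →ₗ[K] A)
    (hPl : ∀ x y, l (P x) (P y) = P (reyProd l P x y))
    (hPm : ∀ x y, m (P x) (P y) = P (reyProd m P x y))
    (hPr : ∀ x y, r (P x) (P y) = P (reyProd r P x y)) :
    IsTriassoc K (reyProd l P) (reyProd m P) (reyProd r P)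
    ∧ (∀ x y, P (reyProd l P x y) = l (P x) (P y))
    ∧ (∀ x y, P (reyProd m P x y) = m (P x) (P y))
    ∧ (∀ x y, P (reyProd r P x y) = r (P x) (P y))
    ∧ (∀ x y, reyProd l P (P x) (P y) = P (reyProd (reyProd l P) P x y))
    ∧ (∀ x y, reyProd m P (P x) (P y) = P (reyProd (reyProd m P) P x y))
    ∧ (∀ x y, reyProd r P (P x) (P y) = P (reyProd (reyProd r P) P x y)) :=
  ⟨h.reyProd P hPl hPm hPr,
    fun x y => (hPl x y).symm, fun x y => (hPm x y).symm, fun x y => (hPr x y).symm,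
    IsReynolds.reyProd hPl, IsReynolds.reyProd hPm, IsReynolds.reyProd hPr⟩
end

section
/- Let (A, ⊣, ⊥, ⊢) be a triassociative algebra over a field K and let θ : A → A be an element of centroid on A. Then A, equipped with the products x ◁ y = θ(x) ⊣ y, x △ y = θ(x) ⊥ y, x ▷ y = θ(x) ⊢ y, is again a triassociative algebra. -/
theorem IsLinearMap.comp_linearMap {R M M₂ M₃ : Type*} [Semiring R] [AddCommMonoid M]
    [AddCommMonoid M₂] [AddCommMonoid M₃] [Module R M] [Module R M₂] [Module R M₃]
    {f : M₂ → M₃} (hf : IsLinearMap R f) (g : M →ₗ[R] M₂) : IsLinearMap R (fun x => f (g x)) :=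
  ((IsLinearMap.mk' f hf).comp g).isLinear

theorem twist_left_of_mixedAssoc {A : Type*} {p q s t : A → A → A} (θ : A → A)
    (hθ : ∀ x y, θ (p x y) = p x (θ y)) (H : ∀ x y z, q (p x y) z = s x (t y z)) (x y z : A) :
    q (θ (p (θ x) y)) z = s (θ x) (t (θ y) z) := by
  rw [hθ]
  exact H _ _ _

theorem centroid_triassoc {K A : Type*} [Field K] [AddCommGroup A] [Module K A]
    (l m r : A → A → A) (h : IsTriassoc K l m r) (θ : A →ₗ[K] A)
    (hl : ∀ x y, θ (l x y) = l (θ x) y ∧ θ (l x y) = l x (θ y))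
    (hm : ∀ x y, θ (m x y) = m (θ x) y ∧ θ (m x y) = m x (θ y))
    (hr : ∀ x y, θ (r x y) = r (θ x) y ∧ θ (r x y) = r x (θ y)) :
    IsTriassoc K (fun x y => l (θ x) y) (fun x y => m (θ x) y) (fun x y => r (θ x) y) := by
  have hl' : ∀ x y, θ (l x y) = l x (θ y) := fun x y => (hl x y).2
  have hm' : ∀ x y, θ (m x y) = m x (θ y) := fun x y => (hm x y).2
  have hr' : ∀ x y, θ (r x y) = r x (θ y) := fun x y => (hr x y).2
  exact
    { l_lin₁ := fun y => (h.l_lin₁ y).comp_linearMap θ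
      l_lin₂ := fun x => h.l_lin₂ (θ x)
      m_lin₁ := fun y => (h.m_lin₁ y).comp_linearMap θ
      m_lin₂ := fun x => h.m_lin₂ (θ x)
      r_lin₁ := fun y => (h.r_lin₁ y).comp_linearMap θ
      r_lin₂ := fun x => h.r_lin₂ (θ x)
      ax1 := twist_left_of_mixedAssoc θ hl' h.ax1
      ax2 := twist_left_of_mixedAssoc θ hr' h.ax2
      ax3 := twist_left_of_mixedAssoc θ hm' h.ax3
      ax4 := twist_left_of_mixedAssoc θ hl' h.ax4
      ax5 := twist_left_of_mixedAssoc θ hl' h.ax5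
      ax6 := twist_left_of_mixedAssoc θ hr' h.ax6
      ax7 := twist_left_of_mixedAssoc θ hl' h.ax7
      ax8 := twist_left_of_mixedAssoc θ hm' h.ax8
      ax9 := twist_left_of_mixedAssoc θ hm' h.ax9
      ax10 := twist_left_of_mixedAssoc θ hl' h.ax10
      ax11 := twist_left_of_mixedAssoc θ hr' h.ax11 }
end

section
/- Let (L, [-,-,-]) be a (right) ternary Leibniz algebra over a field K and let R : L → L be a Rota–Baxter operator of weight λ ∈ K on L. Then L with the bracket [x,y,z]_R = [R(x),R(y),z] + [R(x),y,R(z)] + [x,R(y),R(z)] + λ[R(x),y,z] + λ[x,R(y),z] + λ[x,y,R(z)] + λ²[x,y,z] is again a (right) ternary Leibniz algebra. -/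
/-!
Let `A = K[ε]/(ε² - λε)`. The `A`-trilinear extension of `[-,-,-]` to `L ⊗ A` is again ternary
Leibniz, and since `ε² = λε`, `ε³ = λ²ε`, the `ε`-component of `[Rx + εx, Ry + εy, Rz + εz]` is
exactly `[x,y,z]_R`, while the Rota–Baxter identity says its constant component is `R [x,y,z]_R`.
So `x ↦ Rx + εx` embeds `(L, [-,-,-]_R)` into `L ⊗ A` as a subalgebra, and the Leibniz identity
pulls back along this injective homomorphism.
-/

structure IsTernaryLeibnizR (K : Type*) [Field K] {L : Type*} [AddCommGroup L] [Module K L]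
    (b : L → L → L → L) : Prop where
  lin₁ : ∀ y z, IsLinearMap K (fun x => b x y z)
  lin₂ : ∀ x z, IsLinearMap K (fun y => b x y z)
  lin₃ : ∀ x y, IsLinearMap K (fun z => b x y z)
  leib : ∀ x y z t u,
    b (b x y z) t u = b x y (b z t u) + b x (b y t u) z + b (b x t u) y z

/-- The Rota–Baxter deformed ternary bracket of weight `λ`. -/
def rbBracket {K L : Type*} [Field K] [AddCommGroup L] [Module K L]
    (b : L → L → L → L) (R : L → L) (lam : K) : L → L → L → L :=
  fun x y z =>
    b (R x) (R y) z + b (R x) y (R z) + b x (R y) (R z)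
      + lam • b (R x) y z + lam • b x (R y) z + lam • b x y (R z)
      + (lam ^ 2) • b x y z

namespace IsTernaryLeibnizR

variable {K L : Type*} [Field K] [AddCommGroup L] [Module K L] {b : L → L → L → L}

theorem add₁ (h : IsTernaryLeibnizR K b) (x x' y z : L) :
    b (x + x') y z = b x y z + b x' y z :=
  (h.lin₁ y z).map_add x x'

theorem add₂ (h : IsTernaryLeibnizR K b) (x y y' z : L) :
    b x (y + y') z = b x y z + b x y' z :=
  (h.lin₂ x z).map_add y y'

theorem add₃ (h : IsTernaryLeibnizR K b) (x y z z' : L) :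
    b x y (z + z') = b x y z + b x y z' :=
  (h.lin₃ x y).map_add z z'

theorem smul₁ (h : IsTernaryLeibnizR K b) (c : K) (x y z : L) :
    b (c • x) y z = c • b x y z :=
  (h.lin₁ y z).map_smul c x

theorem smul₂ (h : IsTernaryLeibnizR K b) (c : K) (x y z : L) :
    b x (c • y) z = c • b x y z :=
  (h.lin₂ x z).map_smul c y

theorem smul₃ (h : IsTernaryLeibnizR K b) (c : K) (x y z : L) :
    b x y (c • z) = c • b x y z :=
  (h.lin₃ x y).map_smul c z

theorem of_injective {M : Type*} [AddCommGroup M] [Module K M] {b' : M → M → M → M}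
    (h : IsTernaryLeibnizR K b) (f : M →ₗ[K] L) (hf : Function.Injective f)
    (hfb : ∀ x y z, f (b' x y z) = b (f x) (f y) (f z)) : IsTernaryLeibnizR K b' where
  lin₁ y z := ⟨fun x x' => hf (by simp only [hfb, map_add, h.add₁]),
    fun c x => hf (by simp only [hfb, map_smul, h.smul₁])⟩
  lin₂ x z := ⟨fun y y' => hf (by simp only [hfb, map_add, h.add₂]),
    fun c y => hf (by simp only [hfb, map_smul, h.smul₂])⟩
  lin₃ x y := ⟨fun z z' => hf (by simp only [hfb, map_add, h.add₃]),
    fun c z => hf (by simp only [hfb, map_smul, h.smul₃])⟩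
  leib x y z t u := hf (by simp only [hfb, map_add]; exact h.leib _ _ _ _ _)

end IsTernaryLeibnizR

/-- The bracket of `L ⊗ K[ε]/(ε² - λε)`, where `(a, x)` stands for `a + εx`. -/
def epsBracket {K L : Type*} [Field K] [AddCommGroup L] [Module K L]
    (b : L → L → L → L) (lam : K) : L × L → L × L → L × L → L × L :=
  fun (a, x) (c, y) (e, z) =>
    (b a c e,
      b a c z + b a y e + b x c e
        + lam • b a y z + lam • b x c z + lam • b x y e
        + (lam ^ 2) • b x y z)

theorem IsTernaryLeibnizR.epsBracket {K L : Type*} [Field K] [AddCommGroup L] [Module K L]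
    {b : L → L → L → L} (h : IsTernaryLeibnizR K b) (lam : K) :
    IsTernaryLeibnizR K (epsBracket b lam) := by
  constructor
  case leib =>
    rintro ⟨a, x⟩ ⟨c, y⟩ ⟨e, z⟩ ⟨f, t⟩ ⟨g, u⟩
    -- `b'` is a copy of `b` that `simp` cannot see through, so that the Leibniz rule is
    -- applied exactly once to each monomial of the left-hand side.
    obtain ⟨b', hb'⟩ : ∃ b', b' = b := ⟨b, rfl⟩
    have leib' : ∀ x y z t u,
        b (b x y z) t u = b' x y (b z t u) + b' x (b y t u) z + b' (b x t u) y z := by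
      subst hb'; exact h.leib
    ext
    · exact h.leib _ _ _ _ _
    · simp only [_root_.epsBracket, Prod.snd_add, h.add₁, h.add₂, h.add₃, h.smul₁, h.smul₂,
        h.smul₃]
      conv_lhs => simp only [leib']
      subst hb'
      module
  all_goals
    refine fun _ _ => ⟨fun _ _ => ?_, fun _ _ => ?_⟩ <;> ext <;>
      simp only [_root_.epsBracket, Prod.fst_add, Prod.snd_add, Prod.smul_fst, Prod.smul_snd,
        h.add₁, h.add₂, h.add₃, h.smul₁, h.smul₂, h.smul₃]
  all_goals module

theorem epsBracket_graph_of_rotaBaxter {K L : Type*} [Field K] [AddCommGroup L] [Module K L]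
    {b : L → L → L → L} {R : L → L} {lam : K}
    (hR : ∀ x y z, b (R x) (R y) (R z) = R (rbBracket b R lam x y z)) (x y z : L) :
    epsBracket b lam (R x, x) (R y, y) (R z, z)
      = (R (rbBracket b R lam x y z), rbBracket b R lam x y z) :=
  Prod.ext (hR x y z) rfl

theorem rotaBaxter_ternaryLeibniz {K L : Type*} [Field K] [AddCommGroup L] [Module K L]
    (b : L → L → L → L) (h : IsTernaryLeibnizR K b) (R : L →ₗ[K] L) (lam : K)
    (hR : ∀ x y z, b (R x) (R y) (R z) = R (rbBracket b R lam x y z)) :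
    IsTernaryLeibnizR K (rbBracket b R lam) := by
  let graph : L →ₗ[K] L × L := R.prod LinearMap.id
  have graph_injective : Function.Injective graph := fun x y hxy => congrArg Prod.snd hxy
  exact (h.epsBracket lam).of_injective graph graph_injective
    fun x y z => (epsBracket_graph_of_rotaBaxter hR x y z).symm
end

section
/- Let (L, [-,-]) be a (right) Leibniz algebra over a field K and let R : L → L be a Rota–Baxter operator of weight λ ∈ K on L. Then L with the bracket [x,y]_R = [R(x),y] + [x,R(y)] + λ[x,y] is again a (right) Leibniz algebra, and R is a morphism of Leibniz algebras from (L, [-,-]_R) to (L, [-,-]). -/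
structure IsLeibnizR (K : Type*) [Field K] {L : Type*} [AddCommGroup L] [Module K L]
    (b : L → L → L) : Prop where
  lin₁ : ∀ y, IsLinearMap K (fun x => b x y)
  lin₂ : ∀ x, IsLinearMap K (fun y => b x y)
  leib : ∀ x y z, b (b x y) z = b x (b y z) + b (b x z) y

/-- The Rota–Baxter deformed binary bracket of weight `λ`. -/
def rbBin {K L : Type*} [Field K] [AddCommGroup L] [Module K L]
    (b : L → L → L) (R : L → L) (lam : K) : L → L → L :=
  fun x y => b (R x) y + b x (R y) + lam • b x y

/-! Since `R` is a homomorphism `[-,-]_R → [-,-]`, `[[x,y]_R, z]_R` expands into seven brackets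
of `b`, each with one of `x, y, z` possibly replaced by its image under `R`; the Leibniz identity
of `b` applied to every one of them gives the Leibniz identity of `[-,-]_R`. -/

section RotaBaxter

variable {K L : Type*} [Field K] [AddCommGroup L] [Module K L] {b : L → L → L}

theorem isLinearMap_rbBin_left (hb : ∀ y, IsLinearMap K (fun x => b x y)) (R : L →ₗ[K] L)
    (lam : K) (y : L) : IsLinearMap K (fun x => rbBin b R lam x y) :=
  ((hb y).mk'.comp R + (hb (R y)).mk' + lam • (hb y).mk').isLinear

theorem isLinearMap_rbBin_right (hb : ∀ x, IsLinearMap K (fun y => b x y)) (R : L →ₗ[K] L)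
    (lam : K) (x : L) : IsLinearMap K (fun y => rbBin b R lam x y) :=
  ((hb (R x)).mk' + (hb x).mk'.comp R + lam • (hb x).mk').isLinear

theorem rbBin_leib (h : IsLeibnizR K b) {R : L →ₗ[K] L} {lam : K}
    (hR : ∀ x y, R (rbBin b R lam x y) = b (R x) (R y)) (x y z : L) :
    rbBin b R lam (rbBin b R lam x y) z =
      rbBin b R lam x (rbBin b R lam y z) + rbBin b R lam (rbBin b R lam x z) y := by
  have add₁ x x' y : b (x + x') y = b x y + b x' y := (h.lin₁ y).map_add x x'
  have smul₁ (c : K) x y : b (c • x) y = c • b x y := (h.lin₁ y).map_smul c x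
  have add₂ x y y' : b x (y + y') = b x y + b x y' := (h.lin₂ x).map_add y y'
  have smul₂ (c : K) x y : b x (c • y) = c • b x y := (h.lin₂ x).map_smul c y
  simp only [rbBin] at hR ⊢
  simp only [hR, add₁, add₂, smul₁, smul₂, smul_add]
  rw [h.leib (R x) (R y) z, h.leib (R x) y (R z), h.leib x (R y) (R z),
    h.leib x y (R z), h.leib (R x) y z, h.leib x (R y) z, h.leib x y z]
  module

theorem isLeibnizR_rbBin (h : IsLeibnizR K b) {R : L →ₗ[K] L} {lam : K}
    (hR : ∀ x y, R (rbBin b R lam x y) = b (R x) (R y)) : IsLeibnizR K (rbBin b R lam) where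
  lin₁ := isLinearMap_rbBin_left h.lin₁ R lam
  lin₂ := isLinearMap_rbBin_right h.lin₂ R lam
  leib := rbBin_leib h hR

end RotaBaxter

theorem rotaBaxter_leibniz {K L : Type*} [Field K] [AddCommGroup L] [Module K L]
    (b : L → L → L) (h : IsLeibnizR K b) (R : L →ₗ[K] L) (lam : K)
    (hR : ∀ x y, b (R x) (R y) = R (rbBin b R lam x y)) :
    IsLeibnizR K (rbBin b R lam)
    ∧ (∀ x y, R (rbBin b R lam x y) = b (R x) (R y)) :=
  have hom : ∀ x y, R (rbBin b R lam x y) = b (R x) (R y) := fun x y => (hR x y).symm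
  ⟨isLeibnizR_rbBin h hom, hom⟩
end

section
/- Let (A, ⊣, ⊥, ⊢) be a triassociative algebra over a field K. Then A with the trilinear bracket [x,y,z] := x ⊣ (y ⊥ z − z ⊥ y) − (y ⊥ z − z ⊥ y) ⊢ x is a (right) ternary Leibniz algebra. -/
def IsLinearMap.mk₂ {R M N P : Type*} [CommSemiring R] [AddCommMonoid M] [AddCommMonoid N]
    [AddCommMonoid P] [Module R M] [Module R N] [Module R P] (f : M → N → P)
    (h₁ : ∀ n, IsLinearMap R fun m => f m n) (h₂ : ∀ m, IsLinearMap R fun n => f m n) :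
    M →ₗ[R] N →ₗ[R] P :=
  LinearMap.mk₂ R f (fun m₁ m₂ n => (h₁ n).map_add m₁ m₂) (fun c m n => (h₁ n).map_smul c m)
    (fun m n₁ n₂ => (h₂ m).map_add n₁ n₂) (fun c m n => (h₂ m).map_smul c n)

section

variable {K A : Type*} [Field K] [AddCommGroup A] [Module K A]

def diBracket (l r : A → A → A) (x a : A) : A := l x a - r a x

def commBracket (m : A → A → A) (y z : A) : A := m y z - m z y

namespace IsTriassoc

variable {l m r : A → A → A}

def diBracketₗ (h : IsTriassoc K l m r) : A →ₗ[K] A →ₗ[K] A :=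
  IsLinearMap.mk₂ l h.l_lin₁ h.l_lin₂ - (IsLinearMap.mk₂ r h.r_lin₁ h.r_lin₂).flip

def commBracketₗ (h : IsTriassoc K l m r) : A →ₗ[K] A →ₗ[K] A :=
  IsLinearMap.mk₂ m h.m_lin₁ h.m_lin₂ - (IsLinearMap.mk₂ m h.m_lin₁ h.m_lin₂).flip

theorem l_sub_left (h : IsTriassoc K l m r) (x y z : A) : l (x - y) z = l x z - l y z :=
  (h.l_lin₁ z).map_sub x y

theorem l_sub_right (h : IsTriassoc K l m r) (x y z : A) : l x (y - z) = l x y - l x z :=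
  (h.l_lin₂ x).map_sub y z

theorem m_sub_left (h : IsTriassoc K l m r) (x y z : A) : m (x - y) z = m x z - m y z :=
  (h.m_lin₁ z).map_sub x y

theorem m_sub_right (h : IsTriassoc K l m r) (x y z : A) : m x (y - z) = m x y - m x z :=
  (h.m_lin₂ x).map_sub y z

theorem r_sub_left (h : IsTriassoc K l m r) (x y z : A) : r (x - y) z = r x z - r y z :=
  (h.r_lin₁ z).map_sub x y

theorem r_sub_right (h : IsTriassoc K l m r) (x y z : A) : r x (y - z) = r x y - r x z :=
  (h.r_lin₂ x).map_sub y z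

theorem l_r_eq_l_l (h : IsTriassoc K l m r) (x y z : A) : l x (r y z) = l x (l y z) := by
  rw [← h.ax4, h.ax1]

theorem l_m_eq_l_l (h : IsTriassoc K l m r) (x y z : A) : l x (m y z) = l x (l y z) := by
  rw [← h.ax5, h.ax1]

theorem diBracket_diBracket (h : IsTriassoc K l m r) (x a b : A) :
    diBracket l r (diBracket l r x a) b =
      diBracket l r (diBracket l r x b) a + diBracket l r x (diBracket l r a b) := by
  simp only [diBracket, h.l_sub_left, h.l_sub_right, h.r_sub_left, h.r_sub_right,
    h.ax1, h.ax2, h.ax6, h.ax7, h.l_r_eq_l_l]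
  abel

theorem diBracket_diBracket_commBracket (h : IsTriassoc K l m r) (x y z w : A) :
    diBracket l r x (diBracket l r (commBracket m y z) w) =
      diBracket l r x (commBracket m y (diBracket l r z w)) +
        diBracket l r x (commBracket m (diBracket l r y w) z) := by
  simp only [diBracket, commBracket, h.l_sub_left, h.l_sub_right, h.m_sub_left, h.m_sub_right,
    h.r_sub_left, h.r_sub_right, h.ax2, h.ax7, h.ax8, h.ax9, h.ax10, h.ax11, h.l_r_eq_l_l,
    h.l_m_eq_l_l]
  abel

theorem ternaryLeibniz (h : IsTriassoc K l m r) (x y z t u : A) :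
    diBracket l r (diBracket l r x (commBracket m y z)) (commBracket m t u) =
      diBracket l r x (commBracket m y (diBracket l r z (commBracket m t u))) +
        diBracket l r x (commBracket m (diBracket l r y (commBracket m t u)) z) +
          diBracket l r (diBracket l r x (commBracket m t u)) (commBracket m y z) := by
  rw [h.diBracket_diBracket, h.diBracket_diBracket_commBracket]
  abel

end IsTriassoc

end

theorem triassoc_to_ternaryLeibniz {K A : Type*} [Field K] [AddCommGroup A] [Module K A]
    (l m r : A → A → A) (h : IsTriassoc K l m r) :
    IsTernaryLeibnizR K (fun x y z => l x (m y z - m z y) - r (m y z - m z y) x) :=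
  ⟨fun y z => (h.diBracketₗ.flip (commBracket m y z)).isLinear,
    fun x z => (h.diBracketₗ x ∘ₗ h.commBracketₗ.flip z).isLinear,
    fun x y => (h.diBracketₗ x ∘ₗ h.commBracketₗ y).isLinear,
    h.ternaryLeibniz⟩
end

section
/- Let (A, ⊣, ⊥, ⊢) be a triassociative algebra over a field K. Then A with the trilinear bracket [x,y,z]₁ := x ⊣ (y ⊥ z) − (y ⊥ z) ⊢ x is a (right) ternary Leibniz algebra. -/
/-!
Write `{x, a} := x ⊣ a - a ⊢ x`, so that `[x, y, z]₁ = {x, y ⊥ z}`. The axioms involving only `⊣`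
and `⊢` make `{-, -}` a right Leibniz bracket, and those mixing `⊥` with `⊣`, `⊢` make every
`{-, v}` a derivation of `⊥`. Hence
`[[x, y, z]₁, t, u]₁ = {{x, y ⊥ z}, t ⊥ u} = {{x, t ⊥ u}, y ⊥ z} + {x, {y ⊥ z, t ⊥ u}}`
and expanding `{y ⊥ z, t ⊥ u}` by the derivation rule gives the ternary Leibniz identity.
-/

section

variable {K A : Type*} [Field K] [AddCommGroup A] [Module K A]

namespace IsTriassoc

variable {l m r : A → A → A}

theorem isLinearMap_diBracket_left (h : IsTriassoc K l m r) (a : A) :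
    IsLinearMap K (diBracket l r · a) :=
  (IsLinearMap.mk' _ (h.l_lin₁ a) - IsLinearMap.mk' _ (h.r_lin₂ a)).isLinear

theorem isLinearMap_diBracket_right (h : IsTriassoc K l m r) (x : A) :
    IsLinearMap K (diBracket l r x) :=
  (IsLinearMap.mk' _ (h.l_lin₂ x) - IsLinearMap.mk' _ (h.r_lin₁ x)).isLinear

theorem diBracket_mid (h : IsTriassoc K l m r) (y z v : A) :
    diBracket l r (m y z) v = m y (diBracket l r z v) + m (diBracket l r y v) z := by
  simp only [diBracket, (h.m_lin₁ _).map_sub, (h.m_lin₂ _).map_sub]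
  rw [h.ax9, h.ax10, h.ax11]
  abel

end IsTriassoc

end

theorem triassoc_to_ternaryLeibniz₁ {K A : Type*} [Field K] [AddCommGroup A] [Module K A]
    (l m r : A → A → A) (h : IsTriassoc K l m r) :
    IsTernaryLeibnizR K (fun x y z => l x (m y z) - r (m y z) x) := by
  refine ⟨fun y z => h.isLinearMap_diBracket_left (m y z), fun x z => ?_, fun x y => ?_,
    fun x y z t u => ?_⟩
  · exact (IsLinearMap.mk' _ (h.isLinearMap_diBracket_right x) ∘ₗ
      IsLinearMap.mk' _ (h.m_lin₁ z)).isLinear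
  · exact (IsLinearMap.mk' _ (h.isLinearMap_diBracket_right x) ∘ₗ
      IsLinearMap.mk' _ (h.m_lin₂ y)).isLinear
  · change diBracket l r (diBracket l r x (m y z)) (m t u) =
      diBracket l r x (m y (diBracket l r z (m t u))) +
        diBracket l r x (m (diBracket l r y (m t u)) z) +
        diBracket l r (diBracket l r x (m t u)) (m y z)
    rw [h.diBracket_diBracket, h.diBracket_mid, (h.isLinearMap_diBracket_right x).map_add]
    abel
end

section
/- Let (A, ⊣, ⊥, ⊢) be a triassociative algebra over a field K. Then A with the trilinear bracket [x,y,z]₂ := (z ⊥ y) ⊢ x − x ⊣ (z ⊥ y) is a (right) ternary Leibniz algebra. -/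
/-!
Write `D a x := a ⊢ x - x ⊣ a` (`dialgebraBracket l r a x`), so that `[x, y, z]₂ = D (z ⊥ y) x`.
Axioms 9–11 make every `D a` a derivation of `⊥`, and the dialgebra axioms give
`D a ∘ D b = D (D a b) + D b ∘ D a`. Taking `a = u ⊥ t`, `b = z ⊥ y` and expanding
`D a (z ⊥ y)` by the derivation rule yields exactly the three terms of the ternary Leibniz identity.
-/

def dialgebraBracket {A : Type*} [AddCommGroup A] (l r : A → A → A) (a x : A) : A :=
  r a x - l x a

namespace IsTriassoc

variable {K A : Type*} [Field K] [AddCommGroup A] [Module K A] {l m r : A → A → A}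

theorem isLinearMap_dialgebraBracket_left (h : IsTriassoc K l m r) (x : A) :
    IsLinearMap K (fun a => dialgebraBracket l r a x) :=
  (IsLinearMap.mk' _ (h.r_lin₁ x) - IsLinearMap.mk' _ (h.l_lin₂ x)).isLinear

theorem isLinearMap_dialgebraBracket_right (h : IsTriassoc K l m r) (a : A) :
    IsLinearMap K (dialgebraBracket l r a) :=
  (IsLinearMap.mk' _ (h.r_lin₂ a) - IsLinearMap.mk' _ (h.l_lin₁ a)).isLinear

theorem dialgebraBracket_middle (h : IsTriassoc K l m r) (a y z : A) :
    dialgebraBracket l r a (m z y) =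
      m (dialgebraBracket l r a z) y + m z (dialgebraBracket l r a y) := by
  simp only [dialgebraBracket, (h.m_lin₁ y).map_sub, (h.m_lin₂ z).map_sub, h.ax9, h.ax10, h.ax11]
  abel

theorem dialgebraBracket_dialgebraBracket (h : IsTriassoc K l m r) (a b x : A) :
    dialgebraBracket l r a (dialgebraBracket l r b x) =
      dialgebraBracket l r (dialgebraBracket l r a b) x +
        dialgebraBracket l r b (dialgebraBracket l r a x) := by
  simp only [dialgebraBracket, (h.l_lin₁ _).map_sub, (h.l_lin₂ _).map_sub, (h.r_lin₁ _).map_sub,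
    (h.r_lin₂ _).map_sub, ← h.ax4, h.ax1, h.ax2, h.ax6, h.ax7]
  abel

end IsTriassoc

theorem triassoc_to_ternaryLeibniz₂ {K A : Type*} [Field K] [AddCommGroup A] [Module K A]
    (l m r : A → A → A) (h : IsTriassoc K l m r) :
    IsTernaryLeibnizR K (fun x y z => r (m z y) x - l x (m z y)) := by
  change IsTernaryLeibnizR K (fun x y z => dialgebraBracket l r (m z y) x)
  have bracket_left := h.isLinearMap_dialgebraBracket_left
  refine ⟨fun y z => h.isLinearMap_dialgebraBracket_right (m z y), fun x z => ?_, fun x y => ?_, ?_⟩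
  · exact ((IsLinearMap.mk' _ (bracket_left x)).comp (IsLinearMap.mk' _ (h.m_lin₂ z))).isLinear
  · exact ((IsLinearMap.mk' _ (bracket_left x)).comp (IsLinearMap.mk' _ (h.m_lin₁ y))).isLinear
  · intro x y z t u
    rw [h.dialgebraBracket_dialgebraBracket, h.dialgebraBracket_middle, (bracket_left x).map_add]
end

section
/- Let (L, P, φ) be a crossed module of (right) Leibniz algebras over a field K, with action of P on L given by μ₁ : L × P → L and μ₂ : P × L → L. Let R be a linear map that is simultaneously a Rota–Baxter operator of weight λ on L and on P, commuting with φ (φ∘R = R∘φ), and compatible with the action in the sense that μ₁(R(l), R(p)) = R(μ₁(R(l), p) + μ₁(l, R(p)) + λμ₁(l, p)) and μ₂(R(p), R(l)) = R(μ₂(R(p), l) + μ₂(p, R(l)) + λμ₂(p, l)) for all l ∈ L, p ∈ P. Define μ₁^R(l, p) = μ₁(R(l), p) + μ₁(l, R(p)) + λμ₁(l, p) and μ₂^R(p, l) = μ₂(R(p), l) + μ₂(p, R(l)) + λμ₂(p, l). Then (L_R, P_R, φ), where L_R = (L, [-,-]_R) and P_R = (P, [-,-]_R), is a crossed module of Leibniz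 algebras with the action of P_R on L_R given by μ₁^R and μ₂^R. -/
/-- An action of a (right) Leibniz algebra `(P, bP)` on a (right) Leibniz algebra `(L, bL)`. -/
structure IsLeibnizAction (K : Type*) [Field K] {L P : Type*}
    [AddCommGroup L] [Module K L] [AddCommGroup P] [Module K P]
    (bL : L → L → L) (bP : P → P → P)
    (μ₁ : L → P → L) (μ₂ : P → L → L) : Prop where
  μ₁_lin₁ : ∀ p, IsLinearMap K (fun l => μ₁ l p)
  μ₁_lin₂ : ∀ l, IsLinearMap K (fun p => μ₁ l p)
  μ₂_lin₁ : ∀ l, IsLinearMap K (fun p => μ₂ p l)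
  μ₂_lin₂ : ∀ p, IsLinearMap K (fun l => μ₂ p l)
  a1 : ∀ l₁ l₂ p, μ₁ (bL l₁ l₂) p = bL l₁ (μ₁ l₂ p) + bL (μ₁ l₁ p) l₂
  a2 : ∀ l₁ l₂ p, bL (μ₁ l₁ p) l₂ = bL l₁ (μ₂ p l₂) + μ₁ (bL l₁ l₂) p
  a3 : ∀ l₁ l₂ p, bL (μ₂ p l₁) l₂ = μ₂ p (bL l₁ l₂) + bL (μ₂ p l₂) l₁
  a4 : ∀ l p₁ p₂, μ₂ (bP p₁ p₂) l = μ₂ p₁ (μ₂ p₂ l) + μ₁ (μ₂ p₁ l) p₂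
  a5 : ∀ l p₁ p₂, μ₁ (μ₂ p₁ l) p₂ = μ₂ p₁ (μ₁ l p₂) + μ₂ (bP p₁ p₂) l
  a6 : ∀ l p₁ p₂, μ₁ (μ₁ l p₁) p₂ = μ₁ l (bP p₁ p₂) + μ₁ (μ₁ l p₂) p₁

/-- A crossed module of (right) Leibniz algebras. -/
structure IsLeibnizCrossedModule (K : Type*) [Field K] {L P : Type*}
    [AddCommGroup L] [Module K L] [AddCommGroup P] [Module K P]
    (bL : L → L → L) (bP : P → P → P)
    (μ₁ : L → P → L) (μ₂ : P → L → L) (φ : L →ₗ[K] P) : Prop where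
  leibL : IsLeibnizR K bL
  leibP : IsLeibnizR K bP
  action : IsLeibnizAction K bL bP μ₁ μ₂
  morph : ∀ l₁ l₂, φ (bL l₁ l₂) = bP (φ l₁) (φ l₂)
  c1 : ∀ l p, φ (μ₁ l p) = bP (φ l) p
  c2 : ∀ p l, φ (μ₂ p l) = bP p (φ l)
  c3 : ∀ l₁ l₂, μ₂ (φ l₁) l₂ = bL l₁ l₂
  c4 : ∀ l₁ l₂, μ₁ l₁ (φ l₂) = bL l₁ l₂

section Deformation

variable {K : Type*} [CommRing K]

/-- `rbBin b R lam` is `rbDeform₂ b R R lam`; the deformed actions are `rbDeform₂ μ₁ RL RP lam` and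
`rbDeform₂ μ₂ RP RL lam`. -/
def rbDeform₂ {A B C : Type*} [AddCommGroup C] [Module K C]
    (g : A → B → C) (RA : A → A) (RB : B → B) (lam : K) : A → B → C :=
  fun x y => g (RA x) y + g x (RB y) + lam • g x y

def rbDeform₃ {X Y Z W : Type*} [AddCommGroup W] [Module K W]
    (T : X → Y → Z → W) (RX : X → X) (RY : Y → Y) (RZ : Z → Z) (lam : K) : X → Y → Z → W :=
  fun x y z => T (RX x) (RY y) z + T (RX x) y (RZ z) + T x (RY y) (RZ z)
    + lam • (T (RX x) y z + T x (RY y) z + T x y (RZ z)) + (lam * lam) • T x y z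

def IsRotaBaxterCompatible {A B C : Type*} [AddCommGroup C] [Module K C]
    (g : A → B → C) (RA : A → A) (RB : B → B) (RC : C → C) (lam : K) : Prop :=
  ∀ x y, g (RA x) (RB y) = RC (rbDeform₂ g RA RB lam x y)

theorem isLinearMap_rbDeform₂_left {A B C : Type*} [AddCommGroup A] [Module K A]
    [AddCommGroup C] [Module K C] {g : A → B → C} (hg : ∀ y, IsLinearMap K fun x => g x y)
    (RA : A →ₗ[K] A) (RB : B → B) (lam : K) (y : B) :
    IsLinearMap K fun x => rbDeform₂ g RA RB lam x y := by
  refine ⟨fun x x' => ?_, fun c x => ?_⟩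
  · simp only [rbDeform₂, map_add, (hg _).map_add]
    module
  · simp only [rbDeform₂, map_smul, (hg _).map_smul]
    module

theorem isLinearMap_rbDeform₂_right {A B C : Type*} [AddCommGroup B] [Module K B]
    [AddCommGroup C] [Module K C] {g : A → B → C} (hg : ∀ x, IsLinearMap K fun y => g x y)
    (RA : A → A) (RB : B →ₗ[K] B) (lam : K) (x : A) :
    IsLinearMap K fun y => rbDeform₂ g RA RB lam x y := by
  refine ⟨fun y y' => ?_, fun c y => ?_⟩
  · simp only [rbDeform₂, map_add, (hg _).map_add]
    module
  · simp only [rbDeform₂, map_smul, (hg _).map_smul]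
    module

variable {X Y Z U W : Type*} [AddCommGroup U] [Module K U] [AddCommGroup W] [Module K W]
  {RX : X → X} {RY : Y → Y} {RZ : Z → Z} {RU : U → U} {lam : K}

theorem rbDeform₂_rbDeform₂_fst {f : U → Z → W} {g : X → Y → U}
    (hf : ∀ z, IsLinearMap K fun u => f u z) (hg : IsRotaBaxterCompatible g RX RY RU lam)
    (x : X) (y : Y) (z : Z) :
    rbDeform₂ f RU RZ lam (rbDeform₂ g RX RY lam x y) z
      = rbDeform₃ (fun x y z => f (g x y) z) RX RY RZ lam x y z := by
  rw [rbDeform₂, ← hg x y]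
  simp only [rbDeform₂, rbDeform₃, (hf _).map_add, (hf _).map_smul]
  module

theorem rbDeform₂_rbDeform₂_snd {f : X → U → W} {g : Y → Z → U}
    (hf : ∀ x, IsLinearMap K fun u => f x u) (hg : IsRotaBaxterCompatible g RY RZ RU lam)
    (x : X) (y : Y) (z : Z) :
    rbDeform₂ f RX RU lam x (rbDeform₂ g RY RZ lam y z)
      = rbDeform₃ (fun x y z => f x (g y z)) RX RY RZ lam x y z := by
  rw [rbDeform₂, ← hg y z]
  simp only [rbDeform₂, rbDeform₃, (hf _).map_add, (hf _).map_smul]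
  module

theorem rbDeform₂_leibniz_rule {U₂ U₃ : Type*} [AddCommGroup U₂] [Module K U₂] [AddCommGroup U₃]
    [Module K U₃] {RU₂ : U₂ → U₂} {RU₃ : U₃ → U₃}
    {f₁ : U → Z → W} {g₁ : X → Y → U} {f₂ : X → U₂ → W} {g₂ : Y → Z → U₂}
    {f₃ : U₃ → Y → W} {g₃ : X → Z → U₃}
    (hf₁ : ∀ z, IsLinearMap K fun u => f₁ u z) (hf₂ : ∀ x, IsLinearMap K fun u => f₂ x u)
    (hf₃ : ∀ y, IsLinearMap K fun u => f₃ u y)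
    (hg₁ : IsRotaBaxterCompatible g₁ RX RY RU lam) (hg₂ : IsRotaBaxterCompatible g₂ RY RZ RU₂ lam)
    (hg₃ : IsRotaBaxterCompatible g₃ RX RZ RU₃ lam)
    (h : ∀ x y z, f₁ (g₁ x y) z = f₂ x (g₂ y z) + f₃ (g₃ x z) y) (x : X) (y : Y) (z : Z) :
    rbDeform₂ f₁ RU RZ lam (rbDeform₂ g₁ RX RY lam x y) z
      = rbDeform₂ f₂ RX RU₂ lam x (rbDeform₂ g₂ RY RZ lam y z)
        + rbDeform₂ f₃ RU₃ RY lam (rbDeform₂ g₃ RX RZ lam x z) y := by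
  rw [rbDeform₂_rbDeform₂_fst hf₁ hg₁, rbDeform₂_rbDeform₂_snd hf₂ hg₂,
    rbDeform₂_rbDeform₂_fst hf₃ hg₃]
  simp only [rbDeform₃, h]
  module

end Deformation

theorem IsLeibnizR.rbBin {K L : Type*} [Field K] [AddCommGroup L] [Module K L]
    {b : L → L → L} (hb : IsLeibnizR K b) (R : L →ₗ[K] L) {lam : K}
    (hR : IsRotaBaxterCompatible b R R R lam) : IsLeibnizR K (rbBin b R lam) where
  lin₁ := isLinearMap_rbDeform₂_left hb.lin₁ R R lam
  lin₂ := isLinearMap_rbDeform₂_right hb.lin₂ R R lam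
  leib := rbDeform₂_leibniz_rule hb.lin₁ hb.lin₂ hb.lin₁ hR hR hR hb.leib

theorem IsLeibnizAction.rbDeform₂ {K L P : Type*} [Field K]
    [AddCommGroup L] [Module K L] [AddCommGroup P] [Module K P]
    {bL : L → L → L} {bP : P → P → P} {μ₁ : L → P → L} {μ₂ : P → L → L}
    (hact : IsLeibnizAction K bL bP μ₁ μ₂)
    (hbL₁ : ∀ y, IsLinearMap K fun x => bL x y) (hbL₂ : ∀ x, IsLinearMap K fun y => bL x y)
    (RL : L →ₗ[K] L) (RP : P →ₗ[K] P) {lam : K}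
    (hRL : IsRotaBaxterCompatible bL RL RL RL lam) (hRP : IsRotaBaxterCompatible bP RP RP RP lam)
    (hμ₁ : IsRotaBaxterCompatible μ₁ RL RP RL lam) (hμ₂ : IsRotaBaxterCompatible μ₂ RP RL RL lam) :
    IsLeibnizAction K (rbBin bL RL lam) (rbBin bP RP lam)
      (rbDeform₂ μ₁ RL RP lam) (rbDeform₂ μ₂ RP RL lam) where
  μ₁_lin₁ := isLinearMap_rbDeform₂_left hact.μ₁_lin₁ RL RP lam
  μ₁_lin₂ := isLinearMap_rbDeform₂_right hact.μ₁_lin₂ RL RP lam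
  μ₂_lin₁ := isLinearMap_rbDeform₂_left hact.μ₂_lin₁ RP RL lam
  μ₂_lin₂ := isLinearMap_rbDeform₂_right hact.μ₂_lin₂ RP RL lam
  a1 := rbDeform₂_leibniz_rule hact.μ₁_lin₁ hbL₂ hbL₁ hRL hμ₁ hμ₁ hact.a1
  a2 l₁ l₂ p :=
    rbDeform₂_leibniz_rule hbL₁ hbL₂ hact.μ₁_lin₁ hμ₁ hμ₂ hRL (fun x y z => hact.a2 x z y) l₁ p l₂
  a3 l₁ l₂ p :=
    rbDeform₂_leibniz_rule hbL₁ hact.μ₂_lin₂ hbL₁ hμ₂ hRL hμ₂ (fun x y z => hact.a3 y z x) p l₁ l₂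
  a4 l p₁ p₂ := rbDeform₂_leibniz_rule hact.μ₂_lin₁ hact.μ₂_lin₂ hact.μ₁_lin₁ hRP hμ₂ hμ₂
    (fun x y z => hact.a4 z x y) p₁ p₂ l
  a5 l p₁ p₂ := rbDeform₂_leibniz_rule hact.μ₁_lin₁ hact.μ₂_lin₂ hact.μ₂_lin₁ hμ₂ hμ₁ hRP
    (fun x y z => hact.a5 y x z) p₁ l p₂
  a6 := rbDeform₂_leibniz_rule hact.μ₁_lin₁ hact.μ₁_lin₂ hact.μ₁_lin₁ hμ₁ hRP hμ₁ hact.a6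

theorem rotaBaxter_leibniz_crossedModule {K L P : Type*} [Field K]
    [AddCommGroup L] [Module K L] [AddCommGroup P] [Module K P]
    (bL : L → L → L) (bP : P → P → P)
    (μ₁ : L → P → L) (μ₂ : P → L → L) (φ : L →ₗ[K] P)
    (hcm : IsLeibnizCrossedModule K bL bP μ₁ μ₂ φ)
    (RL : L →ₗ[K] L) (RP : P →ₗ[K] P) (lam : K)
    (hRL : ∀ x y, bL (RL x) (RL y) = RL (rbBin bL RL lam x y))
    (hRP : ∀ x y, bP (RP x) (RP y) = RP (rbBin bP RP lam x y))
    (hcomm : ∀ l, φ (RL l) = RP (φ l))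
    (hμ₁ : ∀ l p, μ₁ (RL l) (RP p)
      = RL (μ₁ (RL l) p + μ₁ l (RP p) + lam • μ₁ l p))
    (hμ₂ : ∀ p l, μ₂ (RP p) (RL l)
      = RL (μ₂ (RP p) l + μ₂ p (RL l) + lam • μ₂ p l)) :
    IsLeibnizCrossedModule K (rbBin bL RL lam) (rbBin bP RP lam)
      (fun l p => μ₁ (RL l) p + μ₁ l (RP p) + lam • μ₁ l p)
      (fun p l => μ₂ (RP p) l + μ₂ p (RL l) + lam • μ₂ p l) φ := by
  obtain ⟨hL, hP, hact, morph, c1, c2, c3, c4⟩ := hcm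
  exact
    { leibL := hL.rbBin RL hRL
      leibP := hP.rbBin RP hRP
      action := hact.rbDeform₂ hL.lin₁ hL.lin₂ RL RP hRL hRP hμ₁ hμ₂
      morph := fun l₁ l₂ => by simp only [rbBin, map_add, map_smul, morph, hcomm]
      c1 := fun l p => by simp only [rbBin, map_add, map_smul, c1, hcomm]
      c2 := fun p l => by simp only [rbBin, map_add, map_smul, c2, hcomm]
      c3 := fun l₁ l₂ => by simp only [rbBin, ← hcomm, c3]
      c4 := fun l₁ l₂ => by simp only [rbBin, ← hcomm, c4] }
end
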